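/- arXiv:2503.01545 — 4 statements merged into one kernel-verified Lean document; each statement's English description precedes it below -/
import Mathlib

section
/- Let N = 2^n and ε > 0. Let x ∈ ℝ^N be a vector all of whose entries have the same sign (all positive or all negative), and suppose there exist reals 0 < m ≤ M with m ≤ |x_i| ≤ M for all i and |m/M − 1| < ε. Let P₊ be the N×N matrix all of whose entries equal 1/N (the density matrix of the uniform superposition state |+⟩^{⊗n}). Then the trace distance between the amplitude-encoded state of x and P₊ satisfies T(ρ(x), P₊) ≤ √(2ε). -/
open MeasureTheory ProbabilityTheory Matrix
open scoped ComplexOrder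

/-- Amplitude encoding of a (nonzero) real vector as an `N × N` complex density matrix. -/
noncomputable def ampEnc {N : ℕ} (x : Fin N → ℝ) : Matrix (Fin N) (Fin N) ℂ :=
  Matrix.of fun i j => (((x i * x j) / (∑ k, x k ^ 2) : ℝ) : ℂ)

/-- Schatten-1 (trace) norm of a complex square matrix: the sum of its singular values,
computed as `Tr √(Aᴴ A)`. -/
noncomputable def traceNorm {N : ℕ} (A : Matrix (Fin N) (Fin N) ℂ) : ℝ :=
  (((Matrix.posSemidef_conjTranspose_mul_self A).1.eigenvectorUnitary.1 *
      diagonal (((↑) : ℝ → ℂ) ∘ (√·) ∘ (Matrix.posSemidef_conjTranspose_mul_self A).1.eigenvalues) *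
      (star (Matrix.posSemidef_conjTranspose_mul_self A).1.eigenvectorUnitary :
        Matrix (Fin N) (Fin N) ℂ)).trace).re

/-- Trace distance `T(ρ, σ) = ‖ρ - σ‖₁ / 2`. -/
noncomputable def traceDist {N : ℕ} (ρ σ : Matrix (Fin N) (Fin N) ℂ) : ℝ :=
  traceNorm (ρ - σ) / 2

namespace AmpEncAux

variable {N : ℕ} (x : Fin N → ℝ)

/-- The real centered matrix `ρ(x) - P₊` (real version). -/
noncomputable def Ar : Matrix (Fin N) (Fin N) ℝ :=
  Matrix.of fun i j => x i * x j / (∑ k, x k ^ 2) - 1 / N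

/-- Sum of a product of affine functions of the entries. -/
lemma sum_lin (a b c d : ℝ) :
    ∑ k, (a * x k + b) * (c * x k + d)
      = a * c * (∑ k, x k ^ 2) + (a * d + b * c) * (∑ k, x k) + N * (b * d) := by
  have h : ∀ k : Fin N, (a * x k + b) * (c * x k + d)
      = a * c * (x k ^ 2) + (a * d + b * c) * x k + b * d := fun k => by ring
  rw [Finset.sum_congr rfl fun k _ => h k]
  rw [Finset.sum_add_distrib, Finset.sum_add_distrib, ← Finset.mul_sum, ← Finset.mul_sum,
    Finset.sum_const, Finset.card_univ, Fintype.card_fin, nsmul_eq_mul]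

lemma Ar_sq (hS2 : (∑ k, x k ^ 2) ≠ 0) (hN : (N : ℝ) ≠ 0) :
    Ar x * Ar x = Matrix.of fun i j =>
      x i * x j / (∑ k, x k ^ 2)
        - (x i + x j) * (∑ k, x k) / (N * ∑ k, x k ^ 2) + 1 / N := by
  ext i j
  have h : ∀ k : Fin N, Ar x i k * Ar x k j
      = (x i / (∑ k, x k ^ 2) * x k + (-(1 / N)))
        * (x j / (∑ k, x k ^ 2) * x k + (-(1 / N))) := fun k => by
    simp only [Ar, Matrix.of_apply]; ring
  rw [Matrix.mul_apply, Finset.sum_congr rfl fun k _ => h k, sum_lin]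
  simp only [Matrix.of_apply]
  field_simp
  ring

lemma Ar_cube (hS2 : (∑ k, x k ^ 2) ≠ 0) (hN : (N : ℝ) ≠ 0) :
    Ar x * Ar x * Ar x
      = (1 - (∑ k, x k) ^ 2 / (N * ∑ k, x k ^ 2)) • Ar x := by
  rw [Ar_sq x hS2 hN]
  ext i j
  have h : ∀ k : Fin N,
      (Matrix.of fun i j =>
        x i * x j / (∑ k, x k ^ 2)
          - (x i + x j) * (∑ k, x k) / (N * ∑ k, x k ^ 2) + 1 / N) i k * Ar x k j
      = ((x i / (∑ k, x k ^ 2) - (∑ k, x k) / (N * ∑ k, x k ^ 2)) * x k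
          + (1 / N - x i * (∑ k, x k) / (N * ∑ k, x k ^ 2)))
        * (x j / (∑ k, x k ^ 2) * x k + (-(1 / N))) := fun k => by
    simp only [Ar, Matrix.of_apply]; ring
  rw [Matrix.mul_apply, Finset.sum_congr rfl fun k _ => h k, sum_lin]
  simp only [Ar, Matrix.smul_apply, Matrix.of_apply, smul_eq_mul]
  field_simp
  ring

lemma Ar_sq_trace (hS2 : (∑ k, x k ^ 2) ≠ 0) (hN : (N : ℝ) ≠ 0) :
    (Ar x * Ar x).trace = 2 * (1 - (∑ k, x k) ^ 2 / (N * ∑ k, x k ^ 2)) := by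
  rw [Ar_sq x hS2 hN, Matrix.trace]
  have h : ∀ i : Fin N, Matrix.diag (Matrix.of fun i j =>
      x i * x j / (∑ k, x k ^ 2)
        - (x i + x j) * (∑ k, x k) / (N * ∑ k, x k ^ 2) + 1 / N) i
      = ((1 / (∑ k, x k ^ 2)) * x i + (-(2 * (∑ k, x k) / (N * ∑ k, x k ^ 2))))
          * (1 * x i + 0) + 1 / N := fun i => by
    simp only [Matrix.diag, Matrix.of_apply]; ring
  rw [Finset.sum_congr rfl fun i _ => h i, Finset.sum_add_distrib, sum_lin,
    Finset.sum_const, Finset.card_univ, Fintype.card_fin, nsmul_eq_mul]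
  field_simp
  ring

/-- The complex centered matrix. -/
noncomputable def Ac : Matrix (Fin N) (Fin N) ℂ := (Ar x).map Complex.ofRealHom

lemma Ac_eq_sub : ampEnc x - Matrix.of (fun _ _ => ((N : ℂ))⁻¹) = Ac x := by
  ext i j
  simp only [Ac, Ar, ampEnc, Matrix.sub_apply, Matrix.map_apply, Matrix.of_apply,
    Complex.ofRealHom_eq_coe]
  push_cast
  ring

lemma Ac_herm : (Ac x)ᴴ = Ac x := by
  ext i j
  simp only [Ac, Ar, Matrix.conjTranspose_apply, Matrix.map_apply, Matrix.of_apply,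
    Complex.ofRealHom_eq_coe, Complex.star_def, Complex.conj_ofReal]
  rw [mul_comm (x j) (x i)]

lemma Ac_mul : Ac x * Ac x = (Ar x * Ar x).map Complex.ofRealHom := (Matrix.map_mul).symm

open scoped MatrixOrder in
lemma sqrtMat_eq {N : ℕ} (A B : Matrix (Fin N) (Fin N) ℂ) (hB_psd : B.PosSemidef)
    (hB_sq : B * B = Aᴴ * A) :
    ((Matrix.posSemidef_conjTranspose_mul_self A).1.eigenvectorUnitary.1 *
      diagonal (((↑) : ℝ → ℂ) ∘ (√·) ∘ (Matrix.posSemidef_conjTranspose_mul_self A).1.eigenvalues) *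
      (star (Matrix.posSemidef_conjTranspose_mul_self A).1.eigenvectorUnitary :
        Matrix (Fin N) (Fin N) ℂ)) = B := by
  have hP := Matrix.posSemidef_conjTranspose_mul_self A
  have h1 := hP.1.cfc_eq Real.sqrt
  rw [← cfcₙ_eq_cfc (hf0 := Real.sqrt_zero), ← CFC.sqrt_eq_real_sqrt _ hP.nonneg,
    CFC.sqrt_unique hB_sq hB_psd.nonneg] at h1
  rw [h1, IsHermitian.cfc, Unitary.conjStarAlgAut_apply]
  rfl

lemma traceDist_eq {N : ℕ} (x : Fin N → ℝ) (hNp : 0 < N) (hS2p : 0 < ∑ k, x k ^ 2)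
    (hcs : (∑ k, x k) ^ 2 ≤ N * ∑ k, x k ^ 2) :
    traceDist (ampEnc x) (Matrix.of fun _ _ => ((N : ℂ))⁻¹)
      = Real.sqrt (1 - (∑ k, x k) ^ 2 / (N * ∑ k, x k ^ 2)) := by
  have hNr : (0 : ℝ) < N := by exact_mod_cast hNp
  have hNne : (N : ℝ) ≠ 0 := hNr.ne'
  have hS2 : (∑ k, x k ^ 2) ≠ 0 := hS2p.ne'
  set c2 : ℝ := (∑ k, x k) ^ 2 / (N * ∑ k, x k ^ 2) with hc2def
  have hNS2 : (0 : ℝ) < N * ∑ k, x k ^ 2 := by positivity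
  have hc2le : c2 ≤ 1 := by rw [hc2def, div_le_one hNS2]; exact hcs
  have h1c2 : (0 : ℝ) ≤ 1 - c2 := by linarith
  set s : ℝ := Real.sqrt (1 - c2) with hsdef
  have hs2 : s ^ 2 = 1 - c2 := Real.sq_sqrt h1c2
  set A : Matrix (Fin N) (Fin N) ℂ := Ac x with hAdef
  have hAH : Aᴴ = A := Ac_herm x
  have hcube : A * A * A = (((1 - c2 : ℝ) : ℂ)) • A := by
    have h1 : Ar x * Ar x * Ar x = (1 - c2) • Ar x := Ar_cube x hS2 hNne
    have : A * A * A = (Ar x * Ar x * Ar x).map Complex.ofRealHom := by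
      rw [hAdef, Ac, ← Matrix.map_mul, ← Matrix.map_mul]
    rw [this, h1]
    ext i j
    simp only [Matrix.map_apply, Matrix.smul_apply, hAdef, Ac, smul_eq_mul,
      Complex.ofRealHom_eq_coe, Complex.ofReal_mul]
  have hA4 : (A * A) * (A * A) = ((1 - c2 : ℝ) : ℂ) • (A * A) := by
    calc (A * A) * (A * A) = (A * A * A) * A := by rw [← mul_assoc]
    _ = ((1 - c2 : ℝ) : ℂ) • (A * A) := by rw [hcube, smul_mul_assoc]
  have hdeg : 1 - c2 = 0 → A * A = 0 := by
    intro h0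
    have h4 : (A * A) * (A * A) = 0 := by
      rw [hA4, h0]; simp
    have hAAH : (A * A)ᴴ = A * A := by rw [Matrix.conjTranspose_mul, hAH]
    exact Matrix.conjTranspose_mul_self_eq_zero.mp (by rw [hAAH]; exact h4)
  set B : Matrix (Fin N) (Fin N) ℂ := ((s⁻¹ : ℝ) : ℂ) • (A * A) with hBdef
  have hB_psd : B.PosSemidef := by
    set t : ℝ := Real.sqrt s⁻¹ with htdef
    have ht : ((t : ℂ)) * ((t : ℂ)) = ((s⁻¹ : ℝ) : ℂ) := by
      rw [← Complex.ofReal_mul, Real.mul_self_sqrt (inv_nonneg.2 (Real.sqrt_nonneg _))]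
    have hBeq : B = ((t : ℂ) • A)ᴴ * ((t : ℂ) • A) := by
      rw [Matrix.conjTranspose_smul, hAH, Matrix.smul_mul, Matrix.mul_smul, smul_smul,
        Complex.star_def, Complex.conj_ofReal, ht, hBdef]
    rw [hBeq]
    exact Matrix.posSemidef_conjTranspose_mul_self _
  have hB_sq : B * B = Aᴴ * A := by
    rw [hAH, hBdef, Matrix.smul_mul, Matrix.mul_smul, smul_smul, hA4, smul_smul]
    by_cases h0 : 1 - c2 = 0
    · rw [hdeg h0]; simp
    · have hs0 : s ≠ 0 := by
        rw [hsdef]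
        exact Real.sqrt_ne_zero'.mpr (lt_of_le_of_ne h1c2 (Ne.symm h0))
      have hcoef : ((s⁻¹ : ℝ) : ℂ) * ((s⁻¹ : ℝ) : ℂ) * ((1 - c2 : ℝ) : ℂ) = 1 := by
        rw [← hs2]
        push_cast
        field_simp
      rw [hcoef, one_smul]
  have hsqrt := sqrtMat_eq A B hB_psd hB_sq
  have htraceAA : (A * A).trace = (((2 * (1 - c2) : ℝ)) : ℂ) := by
    rw [hAdef, Ac_mul x]
    have : ((Ar x * Ar x).map Complex.ofRealHom).trace
        = (((Ar x * Ar x).trace : ℝ) : ℂ) := by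
      simp [Matrix.trace, Matrix.diag, Matrix.map_apply]
    rw [this, Ar_sq_trace x hS2 hNne]
  have htrace : B.trace = ((s⁻¹ * (2 * (1 - c2)) : ℝ) : ℂ) := by
    rw [hBdef, Matrix.trace_smul, htraceAA, smul_eq_mul, ← Complex.ofReal_mul]
  unfold traceDist
  rw [Ac_eq_sub x]
  unfold traceNorm
  rw [← hAdef, hsqrt, htrace, Complex.ofReal_re]
  by_cases h0 : 1 - c2 = 0
  · rw [h0, hsdef, h0, Real.sqrt_zero]
    simp
  · have hs0 : s ≠ 0 := by
      rw [hsdef]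
      exact Real.sqrt_ne_zero'.mpr (lt_of_le_of_ne h1c2 (Ne.symm h0))
    rw [← hs2]
    field_simp

end AmpEncAux

/-- **Concentration of same-sign features to the uniform superposition.**
If all entries of `x ∈ ℝ^N` (`N = 2^n`) have the same sign, with `m ≤ |x i| ≤ M` and
`|m/M - 1| < ε`, then the amplitude-encoded state of `x` is within trace distance
`√(2ε)` of the uniform superposition state `|+⟩⟨+|`, whose entries all equal `1/N`. -/
theorem traceDist_ampEnc_uniform_le (n N : ℕ) (hN : N = 2 ^ n) (ε : ℝ) (hε : 0 < ε)
    (x : Fin N → ℝ) (hsign : (∀ i, 0 < x i) ∨ (∀ i, x i < 0))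
    (m M : ℝ) (hm : 0 < m) (hmM : m ≤ M)
    (hbound : ∀ i, m ≤ |x i| ∧ |x i| ≤ M)
    (hratio : |m / M - 1| < ε) :
    traceDist (ampEnc x) (Matrix.of fun _ _ => ((N : ℂ))⁻¹) ≤ Real.sqrt (2 * ε) := by
  have hNp : 0 < N := by rw [hN]; positivity
  have hNr : (0 : ℝ) < N := by exact_mod_cast hNp
  have hM : 0 < M := lt_of_lt_of_le hm hmM
  have hxne : ∀ i, x i ≠ 0 := by
    rcases hsign with h | h
    · exact fun i => (h i).ne'
    · exact fun i => (h i).ne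
  have hS2p : 0 < ∑ k, x k ^ 2 := by
    refine Finset.sum_pos (fun i _ => ?_) ?_
    · exact pow_pos (abs_pos.mpr (hxne i)) 2 |>.trans_eq (by rw [sq_abs])
    · exact ⟨⟨0, hNp⟩, Finset.mem_univ _⟩
  have hcs : (∑ k, x k) ^ 2 ≤ N * ∑ k, x k ^ 2 := by
    have h := Finset.sum_mul_sq_le_sq_mul_sq Finset.univ (fun _ : Fin N => (1 : ℝ)) x
    simpa [Finset.card_univ] using h
  rw [AmpEncAux.traceDist_eq x hNp hS2p hcs]
  apply Real.sqrt_le_sqrt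
  -- it remains to show `1 - S1^2/(N*S2) ≤ 2*ε`
  have hS1sq : ((N : ℝ) * m) ^ 2 ≤ (∑ k, x k) ^ 2 := by
    rcases hsign with h | h
    · have h1 : (N : ℝ) * m ≤ ∑ k, x k := by
        calc (N : ℝ) * m = ∑ _k : Fin N, m := by
              simp [Finset.sum_const, Finset.card_univ, mul_comm]
        _ ≤ ∑ k, x k := Finset.sum_le_sum fun i _ => by
              have := (hbound i).1
              rwa [abs_of_pos (h i)] at this
      exact pow_le_pow_left₀ (by positivity) h1 2
    · have h1 : (N : ℝ) * m ≤ ∑ k, -x k := by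
        calc (N : ℝ) * m = ∑ _k : Fin N, m := by
              simp [Finset.sum_const, Finset.card_univ, mul_comm]
        _ ≤ ∑ k, -x k := Finset.sum_le_sum fun i _ => by
              have := (hbound i).1
              rwa [abs_of_neg (h i)] at this
      have := pow_le_pow_left₀ (by positivity) h1 2
      calc ((N : ℝ) * m) ^ 2 ≤ (∑ k, -x k) ^ 2 := this
      _ = (∑ k, x k) ^ 2 := by rw [Finset.sum_neg_distrib, neg_sq]
  have hS2ub : (∑ k, x k ^ 2) ≤ N * M ^ 2 := by
    calc (∑ k, x k ^ 2) ≤ ∑ _k : Fin N, M ^ 2 := Finset.sum_le_sum fun i _ => by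
          have h2 := (hbound i).2
          calc x i ^ 2 = |x i| ^ 2 := (sq_abs _).symm
          _ ≤ M ^ 2 := pow_le_pow_left₀ (abs_nonneg _) h2 2
    _ = N * M ^ 2 := by simp [Finset.sum_const, Finset.card_univ, mul_comm]
  have hc2lb : (m / M) ^ 2 ≤ (∑ k, x k) ^ 2 / (N * ∑ k, x k ^ 2) := by
    have h := div_le_div₀ (sq_nonneg (∑ k, x k)) hS1sq
      (by positivity : (0 : ℝ) < N * ∑ k, x k ^ 2)
      (by nlinarith : (N : ℝ) * ∑ k, x k ^ 2 ≤ (N : ℝ) * ((N : ℝ) * M ^ 2))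
    calc (m / M) ^ 2 = ((N : ℝ) * m) ^ 2 / ((N : ℝ) * ((N : ℝ) * M ^ 2)) := by
          field_simp
    _ ≤ (∑ k, x k) ^ 2 / (N * ∑ k, x k ^ 2) := h
  have hmM1 : m / M ≤ 1 := (div_le_one hM).mpr hmM
  have hr : 1 - m / M < ε := by
    have : |m / M - 1| = 1 - m / M := by
      rw [abs_of_nonpos (by linarith)]; ring
    linarith [hratio.trans_le (le_refl ε), this ▸ hratio]
  have hmMnn : 0 ≤ m / M := by positivity
  nlinarith [hc2lb, hmM1, hr, hmMnn]
end

section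
/- Let N = 2^n and let x = (x_0, …, x_{N−1}) be a random vector in ℝ^N whose coordinates are independent and identically distributed real random variables with a common law μ that is symmetric (μ is invariant under the map t ↦ −t) and satisfies μ({0}) = 0. Then the expected amplitude-encoded state is the maximally mixed state: E[ρ(x)] = I/N, i.e., E[x_i x_j / ‖x‖₂²] = 1/N if i = j and = 0 if i ≠ j. -/
open MeasureTheory ProbabilityTheory Matrix
open scoped ComplexOrder

/-- Expected amplitude-encoded state under a distribution `D` on `ℝ^N` (entrywise integral). -/
noncomputable def expEnc {N : ℕ} (D : Measure (Fin N → ℝ)) : Matrix (Fin N) (Fin N) ℂ :=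
  Matrix.of fun i j => ∫ x, ampEnc x i j ∂D

lemma negCoord_measurable {N : ℕ} (i : Fin N) :
    Measurable (fun (x : Fin N → ℝ) (k : Fin N) => if k = i then -(x k) else x k) := by
  apply measurable_pi_iff.mpr
  intro k
  by_cases h : k = i
  · simp only [if_pos h]
    exact ((measurable_pi_apply k : Measurable fun x : Fin N → ℝ => x k)).neg
  · simp only [if_neg h]
    exact measurable_pi_apply k

/-- Flipping the sign of the `i`-th coordinate, as a measurable equivalence. -/
def negCoordEquiv {N : ℕ} (i : Fin N) : (Fin N → ℝ) ≃ᵐ (Fin N → ℝ) where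
  toFun x k := if k = i then -(x k) else x k
  invFun x k := if k = i then -(x k) else x k
  left_inv x := funext fun k => by by_cases h : k = i <;> simp [h]
  right_inv x := funext fun k => by by_cases h : k = i <;> simp [h]
  measurable_toFun := negCoord_measurable i
  measurable_invFun := negCoord_measurable i

/-- **Concentration to the maximally mixed state.**
If the coordinates of a random vector in `ℝ^N` (`N = 2^n`) are i.i.d. with a common law `μ`
that is symmetric (invariant under `t ↦ -t`) and gives no mass to `0`, then the expected
amplitude-encoded state is the maximally mixed state `I / N`. -/
theorem expEnc_pi_symm_eq_smul_one (n N : ℕ) (hN : N = 2 ^ n)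
    (μ : Measure ℝ) [IsProbabilityMeasure μ]
    (hsymm : Measure.map (fun t : ℝ => -t) μ = μ) (h0 : μ {0} = 0) :
    expEnc (Measure.pi fun _ : Fin N => μ)
      = ((N : ℂ))⁻¹ • (1 : Matrix (Fin N) (Fin N) ℂ) := by
  classical
  have hNpos : 0 < N := by rw [hN]; positivity
  set D : Measure (Fin N → ℝ) := Measure.pi fun _ : Fin N => μ with hD
  -- basic measurability
  have hmeas : ∀ i j : Fin N,
      Measurable fun x : Fin N → ℝ => x i * x j / ∑ k, x k ^ 2 := fun i j =>
    ((measurable_pi_apply i).mul (measurable_pi_apply j)).div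
      (Finset.measurable_sum _ fun k _ => (measurable_pi_apply k).pow measurable_const)
  -- uniform bound
  have hbound : ∀ (x : Fin N → ℝ) (i j : Fin N), |x i * x j / ∑ k, x k ^ 2| ≤ 1 := by
    intro x i j
    have hS : 0 ≤ ∑ k, x k ^ 2 := Finset.sum_nonneg fun k _ => sq_nonneg _
    rcases eq_or_lt_of_le hS with h | h
    · have hi : x i ^ 2 = 0 := by
        have := (Finset.sum_eq_zero_iff_of_nonneg
          (fun k _ => sq_nonneg (x k))).mp h.symm i (Finset.mem_univ i)
        exact this
      have : x i = 0 := by nlinarith [sq_nonneg (x i)]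
      simp [this]
    · rw [abs_div, abs_of_pos h, div_le_one h]
      have hi : x i ^ 2 ≤ ∑ k, x k ^ 2 :=
        Finset.single_le_sum (fun k _ => sq_nonneg (x k)) (Finset.mem_univ i)
      have hj : x j ^ 2 ≤ ∑ k, x k ^ 2 :=
        Finset.single_le_sum (fun k _ => sq_nonneg (x k)) (Finset.mem_univ j)
      have habs : |x i * x j| = |x i| * |x j| := abs_mul _ _
      nlinarith [sq_nonneg (|x i| - |x j|), sq_abs (x i), sq_abs (x j),
        abs_nonneg (x i), abs_nonneg (x j)]
  -- integrability
  have hint : ∀ i j : Fin N,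
      Integrable (fun x : Fin N → ℝ => x i * x j / ∑ k, x k ^ 2) D := by
    intro i j
    refine (integrable_const (1 : ℝ)).mono' (hmeas i j).aestronglyMeasurable ?_
    exact Filter.Eventually.of_forall fun x => by
      rw [Real.norm_eq_abs]; exact hbound x i j
  -- off-diagonal entries vanish by the symmetry of μ
  have hoff : ∀ i j : Fin N, i ≠ j →
      (∫ x, x i * x j / ∑ k, x k ^ 2 ∂D) = 0 := by
    intro i j hij
    have hpres : MeasurePreserving (negCoordEquiv i) D D := by
      have h := measurePreserving_pi (fun _ : Fin N => μ) (fun _ : Fin N => μ)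
        (f := fun k t => if k = i then -t else t) (fun k => by
          by_cases h : k = i
          · simp only [h, if_pos rfl]
            exact ⟨measurable_neg, hsymm⟩
          · simp only [if_neg h]
            exact MeasurePreserving.id μ)
      exact h
    have hcomp := hpres.integral_comp (negCoordEquiv i).measurableEmbedding
      (fun y : Fin N → ℝ => y i * y j / ∑ k, y k ^ 2)
    have heq : ∀ x : Fin N → ℝ,
        (negCoordEquiv i x) i * (negCoordEquiv i x) j / (∑ k, (negCoordEquiv i x) k ^ 2)
          = -(x i * x j / ∑ k, x k ^ 2) := by
      intro x
      have h1 : (negCoordEquiv i x) i = -(x i) := by simp [negCoordEquiv]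
      have h2 : (negCoordEquiv i x) j = x j := by
        simp [negCoordEquiv, hij.symm]
      have h3 : (∑ k, (negCoordEquiv i x) k ^ 2) = ∑ k, x k ^ 2 := by
        refine Finset.sum_congr rfl fun k _ => ?_
        by_cases h : k = i <;> simp [negCoordEquiv, h]
      rw [h1, h2, h3]
      ring
    rw [MeasureTheory.integral_congr_ae (Filter.Eventually.of_forall heq)] at hcomp
    rw [integral_neg] at hcomp
    linarith
  -- diagonal entries are all equal, by exchangeability
  have hdiag_eq : ∀ i j : Fin N,
      (∫ x, x i * x i / ∑ k, x k ^ 2 ∂D) = ∫ x, x j * x j / ∑ k, x k ^ 2 ∂D := by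
    intro i j
    set e := MeasurableEquiv.arrowCongr' (Equiv.swap i j) (MeasurableEquiv.refl ℝ) with he
    have hpres : MeasurePreserving e D D := by
      refine measurePreserving_arrowCongr' (fun _ => μ) (fun _ => μ)
        (Equiv.swap i j) (MeasurableEquiv.refl ℝ) (fun k => ?_)
      exact MeasurePreserving.id μ
    have hcomp := hpres.integral_comp' (fun y : Fin N → ℝ => y i * y i / ∑ k, y k ^ 2)
    have heval : ∀ (x : Fin N → ℝ) (k : Fin N), (e x) k = x (Equiv.swap i j k) := by
      intro x k
      simp [he, MeasurableEquiv.arrowCongr', Equiv.arrowCongr', Equiv.arrowCongr]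
    have heq : ∀ x : Fin N → ℝ,
        (e x) i * (e x) i / (∑ k, (e x) k ^ 2) = x j * x j / ∑ k, x k ^ 2 := by
      intro x
      have h1 : (e x) i = x j := by rw [heval]; simp
      have h3 : (∑ k, (e x) k ^ 2) = ∑ k, x k ^ 2 := by
        simp_rw [heval]
        exact Equiv.sum_comp (Equiv.swap i j) (fun t => x t ^ 2)
      rw [h1, h3]
    rw [MeasureTheory.integral_congr_ae (Filter.Eventually.of_forall heq)] at hcomp
    exact hcomp.symm
  -- the diagonal entries sum to 1
  set i0 : Fin N := ⟨0, hNpos⟩ with hi0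
  have hS_ne : ∀ᵐ x ∂D, x i0 ≠ 0 := by
    rw [ae_iff]
    have : {x : Fin N → ℝ | ¬ x i0 ≠ 0} = Function.eval i0 ⁻¹' {0} := by
      ext x; simp [Function.eval]
    rw [this]
    exact Measure.pi_eval_preimage_null (μ := fun _ : Fin N => μ) h0
  have hsum : (∑ i : Fin N, ∫ x, x i * x i / ∑ k, x k ^ 2 ∂D) = 1 := by
    rw [← integral_finset_sum _ (fun i _ => hint i i)]
    have hae : ∀ᵐ x ∂D, (∑ i, x i * x i / ∑ k, x k ^ 2) = 1 := by
      filter_upwards [hS_ne] with x hx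
      have hpos : 0 < ∑ k, x k ^ 2 := by
        have h1 : 0 < x i0 ^ 2 := by positivity
        exact lt_of_lt_of_le h1
          (Finset.single_le_sum (fun k _ => sq_nonneg (x k)) (Finset.mem_univ i0))
      rw [← Finset.sum_div]
      have : (∑ i, x i * x i) = ∑ i, x i ^ 2 := by
        refine Finset.sum_congr rfl fun i _ => (sq (x i)).symm
      rw [this, div_self hpos.ne']
    rw [MeasureTheory.integral_congr_ae hae]
    simp [hD]
  have hdiag : ∀ i : Fin N,
      (∫ x, x i * x i / ∑ k, x k ^ 2 ∂D) = (N : ℝ)⁻¹ := by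
    intro i
    have : (∑ j : Fin N, ∫ x, x j * x j / ∑ k, x k ^ 2 ∂D)
        = N * ∫ x, x i * x i / ∑ k, x k ^ 2 ∂D := by
      rw [Finset.sum_congr rfl fun j _ => hdiag_eq j i]
      simp [mul_comm]
    rw [this] at hsum
    field_simp at hsum ⊢
    linarith
  -- assemble the matrix identity
  ext i j
  simp only [expEnc, ampEnc, Matrix.of_apply, Matrix.smul_apply, Matrix.one_apply,
    smul_eq_mul]
  have hcast : ∫ x, ((x i * x j / ∑ k, x k ^ 2 : ℝ) : ℂ) ∂D
      = ((∫ x, x i * x j / ∑ k, x k ^ 2 ∂D : ℝ) : ℂ) := integral_ofReal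
  rw [hcast]
  by_cases h : i = j
  · subst h
    rw [hdiag i]
    simp
  · rw [hoff i j h]
    simp [h]
end

section
/- Let N = 2^n and let D₁ and D₂ be probability distributions on ℝ^N under each of which the N coordinates are independent, and such that for every index j ∈ {0,…,N−1} the law of the j-th coordinate under D₁ equals the law of the negation of the j-th coordinate under D₂ (i.e., the pushforward under t ↦ −t of the j-th marginal of D₂). Assume each distribution gives zero probability to the zero vector. Then the expected amplitude-encoded states of the two classes coincide: E_{x∼D₁}[ρ(x)] = E_{x∼D₂}[ρ(x)]. -/
open MeasureTheory ProbabilityTheory Matrix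
open scoped ComplexOrder

lemma ampEnc_neg {N : ℕ} (x : Fin N → ℝ) : ampEnc (-x) = ampEnc x := by
  funext i j
  simp [ampEnc, neg_mul_neg, neg_sq]

/-- **Identical expected states for mirror-image classes.**
Consider two distributions on `ℝ^N` (`N = 2^n`) with independent coordinates, the
`j`-th marginal of the first being the pushforward under `t ↦ -t` of the `j`-th
marginal of the second, and each distribution giving no mass to the zero vector.
Then the expected amplitude-encoded states of the two classes coincide. -/
theorem expEnc_pi_neg_eq (n N : ℕ) (hN : N = 2 ^ n)
    (μ₁ μ₂ : Fin N → Measure ℝ)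
    [∀ j, IsProbabilityMeasure (μ₁ j)] [∀ j, IsProbabilityMeasure (μ₂ j)]
    (hneg : ∀ j, μ₁ j = Measure.map (fun t : ℝ => -t) (μ₂ j))
    (h₁0 : Measure.pi μ₁ {0} = 0) (h₂0 : Measure.pi μ₂ {0} = 0) :
    expEnc (Measure.pi μ₁) = expEnc (Measure.pi μ₂) := by
  have hmp : ∀ j, MeasurePreserving (fun t : ℝ => -t) (μ₂ j) (μ₁ j) := fun j =>
    ⟨measurable_neg, (hneg j).symm⟩
  have hpi : MeasurePreserving (fun (x : Fin N → ℝ) i => -(x i))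
      (Measure.pi μ₂) (Measure.pi μ₁) := measurePreserving_pi μ₂ μ₁ hmp
  have hpi' : MeasurePreserving (Neg.neg : (Fin N → ℝ) → Fin N → ℝ)
      (Measure.pi μ₂) (Measure.pi μ₁) := by
    convert hpi using 1
    rfl
  funext i j
  show (∫ x, ampEnc x i j ∂Measure.pi μ₁) = ∫ x, ampEnc x i j ∂Measure.pi μ₂
  rw [← hpi'.map_eq,
    show (Neg.neg : (Fin N → ℝ) → Fin N → ℝ) =
      ⇑(Homeomorph.neg (Fin N → ℝ)).toMeasurableEquiv from rfl,
    integral_map_equiv (Homeomorph.neg (Fin N → ℝ)).toMeasurableEquiv]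
  simp only [Homeomorph.toMeasurableEquiv_coe, Homeomorph.coe_neg]
  congr 1
  funext x
  rw [show -x = (-x : Fin N → ℝ) from rfl, ampEnc_neg]
end

section
/- Let N ≥ 1 and ε > 0. Let x ∈ ℝ^N be a vector all of whose entries have the same sign (all positive or all negative), and suppose there exist reals 0 < m ≤ M with m ≤ |x_i| ≤ M for all i and |m/M − 1| < ε. Then the normalized overlap of x with the all-ones vector satisfies |Σ_{i=0}^{N−1} x_i| / ( √N · ‖x‖₂ ) ≥ √(1 − 2ε). -/
/-- **Overlap estimate for same-sign vectors.**
If all entries of `x ∈ ℝ^N` have the same sign, with `m ≤ |x i| ≤ M` for all `i` and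
`|m/M - 1| < ε`, then the normalized overlap of `x` with the all-ones vector is at
least `√(1 - 2ε)`. -/
theorem overlap_ge_sqrt (N : ℕ) (hN : 1 ≤ N) (ε : ℝ) (hε : 0 < ε)
    (x : Fin N → ℝ) (hsign : (∀ i, 0 < x i) ∨ (∀ i, x i < 0))
    (m M : ℝ) (hm : 0 < m) (hmM : m ≤ M)
    (hbound : ∀ i, m ≤ |x i| ∧ |x i| ≤ M)
    (hratio : |m / M - 1| < ε) :
    Real.sqrt (1 - 2 * ε)
      ≤ |∑ i, x i| / (Real.sqrt N * Real.sqrt (∑ i, (x i) ^ 2)) := by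
  have hM : 0 < M := lt_of_lt_of_le hm hmM
  have hNpos : (0:ℝ) < N := by exact_mod_cast hN
  have hratio' : 1 - ε < m / M := by
    have := (abs_lt.mp hratio).1; linarith
  have hmM1 : m / M ≤ 1 := (div_le_one hM).mpr hmM
  have hmMpos : 0 < m / M := div_pos hm hM
  -- step 1: sqrt(1-2ε) ≤ m/M
  have h1 : Real.sqrt (1 - 2 * ε) ≤ m / M := by
    rcases le_or_gt (1 - 2 * ε) 0 with h | h
    · rw [Real.sqrt_eq_zero'.mpr h]; exact hmMpos.le
    · calc Real.sqrt (1 - 2 * ε) ≤ Real.sqrt ((1 - ε) ^ 2) :=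
            Real.sqrt_le_sqrt (by nlinarith)
        _ = 1 - ε := Real.sqrt_sq (by linarith)
        _ ≤ m / M := hratio'.le
  -- numerator bound
  have hnum : (N:ℝ) * m ≤ |∑ i, x i| := by
    have hconst : (N:ℝ) * m = ∑ _i : Fin N, m := by
      simp [Finset.sum_const, mul_comm]
    rcases hsign with hp | hn
    · rw [abs_of_nonneg (Finset.sum_nonneg fun i _ => (hp i).le), hconst]
      exact Finset.sum_le_sum fun i _ => by
        have := (hbound i).1; rwa [abs_of_pos (hp i)] at this
    · rw [abs_of_nonpos (Finset.sum_nonpos fun i _ => (hn i).le), ← Finset.sum_neg_distrib,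
        hconst]
      exact Finset.sum_le_sum fun i _ => by
        have := (hbound i).1; rwa [abs_of_neg (hn i)] at this
  -- denominator bound
  have hsum_sq_le : ∑ i, (x i) ^ 2 ≤ (N:ℝ) * M ^ 2 := by
    have : (N:ℝ) * M ^ 2 = ∑ _i : Fin N, M ^ 2 := by simp [Finset.sum_const, mul_comm]
    rw [this]
    refine Finset.sum_le_sum fun i _ => ?_
    have h1 := (hbound i).1; have h2 := (hbound i).2
    have : (x i)^2 = |x i|^2 := (sq_abs _).symm
    nlinarith
  have hden_le : Real.sqrt N * Real.sqrt (∑ i, (x i) ^ 2) ≤ (N:ℝ) * M := by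
    have h2 : Real.sqrt (∑ i, (x i) ^ 2) ≤ Real.sqrt ((N:ℝ) * M ^ 2) :=
      Real.sqrt_le_sqrt hsum_sq_le
    calc Real.sqrt N * Real.sqrt (∑ i, (x i) ^ 2)
        ≤ Real.sqrt N * Real.sqrt ((N:ℝ) * M ^ 2) := by
          exact mul_le_mul_of_nonneg_left h2 (Real.sqrt_nonneg _)
      _ = Real.sqrt N * (Real.sqrt N * M) := by
          rw [Real.sqrt_mul hNpos.le, Real.sqrt_sq hM.le]
      _ = (N:ℝ) * M := by rw [← mul_assoc, Real.mul_self_sqrt hNpos.le]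
  have hden_pos : 0 < Real.sqrt N * Real.sqrt (∑ i, (x i) ^ 2) := by
    apply mul_pos (Real.sqrt_pos.mpr hNpos)
    apply Real.sqrt_pos.mpr
    apply Finset.sum_pos _ (Finset.univ_nonempty_iff.mpr ⟨⟨0, hN⟩⟩)
    intro i _
    have h1 := (hbound i).1
    have : x i ≠ 0 := fun h => by simp [h] at h1; linarith
    positivity
  have h2 : m / M ≤ |∑ i, x i| / (Real.sqrt N * Real.sqrt (∑ i, (x i) ^ 2)) := by
    have heq : m / M = ((N:ℝ) * m) / ((N:ℝ) * M) := by
      rw [mul_div_mul_left _ _ (ne_of_gt hNpos)]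
    rw [heq]
    exact div_le_div₀ (abs_nonneg _) hnum hden_pos hden_le
  linarith
end
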